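/- arXiv:2008.08267 — 5 statements merged into one kernel-verified Lean document; each statement's English description precedes it below -/
import Mathlib

section
/- For all 0 < s < t and a, b ∈ ℝ, p_{t−s}(a) · p_s(b) / p_t(a+b) = p_{s(t−s)/t}(b − (s/t)(a+b)). -/
open Real MeasureTheory

noncomputable def p (t x : ℝ) : ℝ :=
  (Real.sqrt (2 * Real.pi * t))⁻¹ * Real.exp (-x ^ 2 / (2 * t))

/-!
The product of two Gaussian densities of variances `u` and `v` factors as the density of
their sum `x + y` (variance `u + v`) times a Gaussian in `y` of variance `u v / (u + v)`,
centred at `v / (u + v) · (x + y)`: the exponents agree by completing the square in `y`,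
and the normalising constants because `u v = (u v / (u + v)) (u + v)`. The theorem is this
factorisation for `u = t - s`, `v = s`, divided by the (positive) density `p t (a + b)`.
-/

lemma p_pos {t : ℝ} (ht : 0 < t) (x : ℝ) : 0 < p t x := by
  unfold p
  positivity

lemma sqrt_two_pi_mul_sqrt_two_pi {u v : ℝ} (hu : 0 < u) (hv : 0 < v) :
    √(2 * π * u) * √(2 * π * v) = √(2 * π * (u * v / (u + v))) * √(2 * π * (u + v)) := by
  rw [← sqrt_mul (by positivity), ← sqrt_mul (by positivity)]
  congr 1
  field_simp

lemma sq_div_add_sq_div_eq {u v : ℝ} (hu : u ≠ 0) (hv : v ≠ 0) (huv : u + v ≠ 0) (x y : ℝ) :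
    x ^ 2 / u + y ^ 2 / v =
      (y - v / (u + v) * (x + y)) ^ 2 / (u * v / (u + v)) + (x + y) ^ 2 / (u + v) := by
  field_simp
  ring

theorem p_mul_p {u v : ℝ} (hu : 0 < u) (hv : 0 < v) (x y : ℝ) :
    p u x * p v y = p (u * v / (u + v)) (y - v / (u + v) * (x + y)) * p (u + v) (x + y) := by
  have hexp := sq_div_add_sq_div_eq hu.ne' hv.ne' (add_pos hu hv).ne' x y
  unfold p
  rw [mul_mul_mul_comm, ← mul_inv, ← exp_add, sqrt_two_pi_mul_sqrt_two_pi hu hv,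
    mul_mul_mul_comm _ (exp _), ← mul_inv, ← exp_add]
  congr 2
  simp only [div_mul_eq_div_div_swap]
  linear_combination (-1 / 2 : ℝ) * hexp

theorem heat_kernel_ratio (s t a b : ℝ) (hs : 0 < s) (hst : s < t) :
    p (t - s) a * p s b / p t (a + b) = p (s * (t - s) / t) (b - s / t * (a + b)) := by
  have h := p_mul_p (sub_pos.mpr hst) hs a b
  rw [sub_add_cancel, mul_comm (t - s)] at h
  rw [div_eq_iff (p_pos (hs.trans hst) _).ne', h]
end

section
/- For all r < s < t and x, z ∈ ℝ, ∫_{-∞}^{∞} p_{t−s}(x−y)² · p_{s−r}(y−z)² dy = √((t−r)/(4π(t−s)(s−r))) · p_{t−r}(x−z)². -/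
open Real MeasureTheory

/-! The square of a heat kernel is a rescaled heat kernel at half the time,
`p_t(x)² = (4πt)^{-1/2} p_{t/2}(x)`, so the integral reduces to the Chapman–Kolmogorov identity
`∫ p_a(x - y) p_b(y - z) dy = p_{a+b}(x - z)`, which follows by completing the square in the
exponent and evaluating a Gaussian integral. -/

lemma sq_p (t x : ℝ) (ht : 0 < t) : p t x ^ 2 = (√(4 * π * t))⁻¹ * p (t / 2) x := by
  have hsqrt : √(4 * π * t) * √(2 * π * (t / 2)) = 2 * π * t := by
    rw [← sqrt_mul (by positivity),
      show 4 * π * t * (2 * π * (t / 2)) = (2 * π * t) ^ 2 by ring, sqrt_sq (by positivity)]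
  simp only [p, mul_pow, ← exp_nat_mul, inv_pow, sq_sqrt (by positivity : 0 ≤ 2 * π * t)]
  rw [← mul_assoc, ← mul_inv, hsqrt]
  congr 2
  field_simp
  ring

lemma neg_sq_div_add_neg_sq_div (a b x y z : ℝ) (ha : a ≠ 0) (hb : b ≠ 0)
    (hab : a + b ≠ 0) :
    -(x - y) ^ 2 / (2 * a) + -(y - z) ^ 2 / (2 * b)
      = -(x - z) ^ 2 / (2 * (a + b))
        + -((a + b) / (2 * a * b)) * (y - (b * x + a * z) / (a + b)) ^ 2 := by
  field_simp
  ring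

lemma integral_p_mul_p (a b x z : ℝ) (ha : 0 < a) (hb : 0 < b) :
    ∫ y, p a (x - y) * p b (y - z) = p (a + b) (x - z) := by
  have hconst : (√(2 * π * a))⁻¹ * (√(2 * π * b))⁻¹ * √(π / ((a + b) / (2 * a * b)))
      = (√(2 * π * (a + b)))⁻¹ := by
    rw [← sqrt_inv, ← sqrt_inv, ← sqrt_inv, ← sqrt_mul (by positivity),
      ← sqrt_mul (by positivity)]
    congr 1
    field_simp
  have hfactor : ∀ y, p a (x - y) * p b (y - z)
      = (√(2 * π * a))⁻¹ * (√(2 * π * b))⁻¹ * exp (-(x - z) ^ 2 / (2 * (a + b)))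
        * exp (-((a + b) / (2 * a * b)) * (y - (b * x + a * z) / (a + b)) ^ 2) := by
    intro y
    rw [mul_assoc _ (exp _), ← exp_add,
      ← neg_sq_div_add_neg_sq_div a b x y z ha.ne' hb.ne' (by positivity), exp_add, p, p]
    ring
  simp_rw [hfactor]
  rw [integral_const_mul,
    integral_sub_right_eq_self (fun y => exp (-((a + b) / (2 * a * b)) * y ^ 2)),
    integral_gaussian, p, ← hconst]
  ring

lemma integral_sq_p_mul_sq_p (a b x z : ℝ) (ha : 0 < a) (hb : 0 < b) :
    ∫ y, p a (x - y) ^ 2 * p b (y - z) ^ 2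
      = √((a + b) / (4 * π * a * b)) * p (a + b) (x - z) ^ 2 := by
  have hconst : (√(4 * π * a))⁻¹ * (√(4 * π * b))⁻¹
      = √((a + b) / (4 * π * a * b)) * (√(4 * π * (a + b)))⁻¹ := by
    rw [← sqrt_inv, ← sqrt_inv, ← sqrt_inv, ← sqrt_mul (by positivity),
      ← sqrt_mul (by positivity)]
    congr 1
    field_simp
  calc ∫ y, p a (x - y) ^ 2 * p b (y - z) ^ 2
      = ∫ y, (√(4 * π * a))⁻¹ * (√(4 * π * b))⁻¹
          * (p (a / 2) (x - y) * p (b / 2) (y - z)) := by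
        congr with y
        rw [sq_p _ _ ha, sq_p _ _ hb]
        ring
    _ = (√(4 * π * a))⁻¹ * (√(4 * π * b))⁻¹ * p ((a + b) / 2) (x - z) := by
        rw [integral_const_mul, integral_p_mul_p _ _ _ _ (half_pos ha) (half_pos hb), add_div]
    _ = _ := by rw [sq_p _ _ (by positivity), ← mul_assoc, hconst]

theorem heat_kernel_square_convolution (r s t x z : ℝ) (hrs : r < s) (hst : s < t) :
    ∫ y : ℝ, (p (t - s) (x - y)) ^ 2 * (p (s - r) (y - z)) ^ 2
      = Real.sqrt ((t - r) / (4 * Real.pi * (t - s) * (s - r))) * (p (t - r) (x - z)) ^ 2 := by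
  rw [show t - r = (t - s) + (s - r) by ring]
  exact integral_sq_p_mul_sq_p _ _ x z (sub_pos.mpr hst) (sub_pos.mpr hrs)
end

section
/- For all λ ≥ 0, the series ∑_{n=1}^{∞} λ^{n−1} / Γ((n+1)/2) equals 2 e^{λ²} ∫_{−∞}^{√2 λ} (1/√(2π)) e^{−y²/2} dy. -/
open Real MeasureTheory

/-!
Substituting `y = √2 λ - t` and using `e^{λ²} e^{-(√2 λ - t)²/2} = e^{√2 λ t} e^{-t²/2}`, the right
side becomes `∫₀^∞ 2 φ(t) e^{√2 λ t} dt` with `φ` the standard normal density. Expanding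
`e^{√2 λ t}` and integrating termwise, the half-normal moments
`∫₀^∞ tⁿ e^{-t²/2} dt = 2^{(n-1)/2} Γ((n+1)/2)` combine with Legendre's duplication formula
`Γ((n+1)/2) Γ((n+2)/2) = n! √π / 2ⁿ` to give exactly `λⁿ / Γ((n+2)/2)`. Termwise integration is
legitimate because the integrals of the absolute values form the same series at `|λ|`, which
converges since `Γ(k + 3/2) ≥ k! Γ(3/2)`.
-/

open Set
open scoped Nat

theorem integral_Iic_eq_integral_Ioi_comp_sub {E : Type*} [NormedAddCommGroup E]
    [NormedSpace ℝ E] (f : ℝ → E) (a : ℝ) :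
    ∫ y in Iic a, f y = ∫ t in Ioi 0, f (a - t) := by
  rw [← integral_Ici_eq_integral_Ioi,
    ← (Measure.measurePreserving_sub_left (volume : Measure ℝ) a).setIntegral_preimage_emb
      (measurableEmbedding_subLeft a) f (Iic a)]
  congr 2
  ext t
  simp

theorem Real.factorial_mul_Gamma_le_Gamma_nat_add {s : ℝ} (hs : 1 ≤ s) (k : ℕ) :
    k ! * Gamma s ≤ Gamma (k + s) := by
  induction k with
  | zero => simp
  | succ k ih =>
    have hks : 0 < (k : ℝ) + s := by positivity
    calc ((k + 1)! : ℝ) * Gamma s = (k + 1) * (k ! * Gamma s) := by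
          push_cast [Nat.factorial_succ]; ring
      _ ≤ ((k : ℝ) + s) * Gamma (k + s) := by gcongr
      _ = Gamma ((k + 1 : ℕ) + s) := by
          rw [← Gamma_add_one hks.ne']; push_cast; ring_nf

theorem Real.summable_pow_div_Gamma_add_two_div_two (x : ℝ) :
    Summable fun n : ℕ => x ^ n / Gamma ((n + 2) / 2) := by
  have hexp := summable_pow_div_factorial (x ^ 2)
  apply Summable.even_add_odd
  · refine hexp.congr fun k => ?_
    rw [show ((2 * k : ℕ) + 2 : ℝ) / 2 = k + 1 by push_cast; ring, Gamma_nat_eq_factorial,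
      pow_mul]
  · refine Summable.of_norm_bounded (hexp.mul_left (|x| / Gamma (3 / 2))) fun k => ?_
    have hle := factorial_mul_Gamma_le_Gamma_nat_add (s := 3 / 2) (by norm_num) k
    have hΓ : 0 < Gamma (k + 3 / 2) := Gamma_pos_of_pos (by positivity)
    have hΓ₀ : 0 < Gamma (3 / 2) := Gamma_pos_of_pos (by norm_num)
    rw [show ((2 * k + 1 : ℕ) + 2 : ℝ) / 2 = k + 3 / 2 by push_cast; ring]
    calc ‖x ^ (2 * k + 1) / Gamma (k + 3 / 2)‖ = |x| * (x ^ 2) ^ k / Gamma (k + 3 / 2) := by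
          rw [norm_div, norm_pow, Real.norm_eq_abs, Real.norm_of_nonneg hΓ.le, pow_succ, pow_mul,
            sq_abs, mul_comm]
      _ ≤ |x| * (x ^ 2) ^ k / (k ! * Gamma (3 / 2)) := by gcongr
      _ = |x| / Gamma (3 / 2) * ((x ^ 2) ^ k / k !) := by field_simp

theorem Real.Gamma_add_one_div_two_mul_Gamma_add_two_div_two (n : ℕ) :
    Gamma ((n + 1) / 2) * Gamma ((n + 2) / 2) = n ! * √π / 2 ^ n := by
  have h := Gamma_mul_Gamma_add_half (((n : ℝ) + 1) / 2)
  rw [show ((n : ℝ) + 1) / 2 + 1 / 2 = (n + 2) / 2 by ring,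
    show 2 * (((n : ℝ) + 1) / 2) = n + 1 by ring, Gamma_nat_eq_factorial,
    show 1 - ((n : ℝ) + 1) = -n by ring, rpow_neg zero_le_two, rpow_natCast] at h
  rw [h]
  ring

theorem integrableOn_Ioi_pow_mul_exp_neg_sq_div_two (n : ℕ) :
    IntegrableOn (fun t : ℝ => t ^ n * exp (-t ^ 2 / 2)) (Ioi 0) := by
  have h := integrableOn_rpow_mul_exp_neg_mul_sq one_half_pos
    (neg_one_lt_zero.trans_le n.cast_nonneg)
  simp only [rpow_natCast] at h
  convert h using 4
  ring

theorem integral_Ioi_pow_mul_exp_neg_sq_div_two (n : ℕ) :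
    ∫ t in Ioi (0 : ℝ), t ^ n * exp (-t ^ 2 / 2) = √2 ^ n * Gamma ((n + 1) / 2) / √2 := by
  have h := integral_rpow_mul_exp_neg_mul_rpow two_pos
    (neg_one_lt_zero.trans_le n.cast_nonneg) (one_half_pos (α := ℝ))
  simp only [rpow_natCast, rpow_two] at h
  have h2 : (1 / 2 : ℝ) ^ (-((n : ℝ) + 1) / 2) = √2 ^ (n + 1) := by
    rw [sqrt_eq_rpow, ← rpow_natCast, ← rpow_mul zero_le_two, one_div, inv_rpow zero_le_two,
      ← rpow_neg zero_le_two]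
    push_cast
    ring_nf
  rw [show (fun t : ℝ => t ^ n * exp (-t ^ 2 / 2)) = fun t => t ^ n * exp (-(1 / 2) * t ^ 2) by
    ext; ring_nf, h, h2]
  field_simp
  rw [pow_succ, mul_assoc, ← sq, sq_sqrt zero_le_two, mul_comm]

noncomputable def gaussExpSeriesTerm (x : ℝ) (n : ℕ) (t : ℝ) : ℝ :=
  2 / √(2 * π) * ((√2 * x * t) ^ n / n !) * exp (-t ^ 2 / 2)

theorem hasSum_gaussExpSeriesTerm (x t : ℝ) :
    HasSum (fun n => gaussExpSeriesTerm x n t)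
      (2 * exp (x ^ 2) * ((√(2 * π))⁻¹ * exp (-(√2 * x - t) ^ 2 / 2))) := by
  have hexp : exp (x ^ 2) * exp (-(√2 * x - t) ^ 2 / 2) = exp (√2 * x * t) * exp (-t ^ 2 / 2) := by
    rw [← exp_add, ← exp_add]
    congr 1
    linear_combination (-1 / 2 : ℝ) * x ^ 2 * sq_sqrt (zero_le_two (α := ℝ))
  have hs := ((NormedSpace.expSeries_div_hasSum_exp (√2 * x * t)).mul_left
    (2 / √(2 * π))).mul_right (exp (-t ^ 2 / 2))
  rw [← exp_eq_exp_ℝ] at hs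
  have hsum : 2 * exp (x ^ 2) * ((√(2 * π))⁻¹ * exp (-(√2 * x - t) ^ 2 / 2))
      = 2 / √(2 * π) * exp (√2 * x * t) * exp (-t ^ 2 / 2) := by
    linear_combination (2 / √(2 * π)) * hexp
  rwa [hsum]

theorem norm_gaussExpSeriesTerm (x : ℝ) (n : ℕ) {t : ℝ} (ht : 0 ≤ t) :
    ‖gaussExpSeriesTerm x n t‖ = gaussExpSeriesTerm |x| n t := by
  simp only [gaussExpSeriesTerm, norm_mul, norm_div, norm_pow, Real.norm_eq_abs, abs_of_nonneg ht,
    abs_exp, abs_two, Nat.abs_cast, abs_of_nonneg (sqrt_nonneg _)]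

theorem integrableOn_gaussExpSeriesTerm (x : ℝ) (n : ℕ) :
    IntegrableOn (gaussExpSeriesTerm x n) (Ioi 0) := by
  refine IntegrableOn.congr_fun ((integrableOn_Ioi_pow_mul_exp_neg_sq_div_two n).const_mul
    (2 / √(2 * π) * (√2 * x) ^ n / n !)) (fun t _ => ?_) measurableSet_Ioi
  simp only [gaussExpSeriesTerm]
  ring

theorem integral_gaussExpSeriesTerm (x : ℝ) (n : ℕ) :
    ∫ t in Ioi 0, gaussExpSeriesTerm x n t = x ^ n / Gamma ((n + 2) / 2) := by
  have hΓ : 0 < Gamma ((n + 2) / 2) := Gamma_pos_of_pos (by positivity)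
  have hdup := Gamma_add_one_div_two_mul_Gamma_add_two_div_two n
  calc _ = 2 / √(2 * π) * (√2 * x) ^ n / n ! * ∫ t in Ioi (0 : ℝ), t ^ n * exp (-t ^ 2 / 2) := by
        rw [← integral_const_mul]
        congr 1 with t
        simp only [gaussExpSeriesTerm]
        ring
    _ = x ^ n / Gamma ((n + 2) / 2) := by
        rw [integral_Ioi_pow_mul_exp_neg_sq_div_two, eq_div_iff hΓ.ne', sqrt_mul zero_le_two,
          mul_pow]
        field_simp at hdup ⊢
        rw [← pow_mul, pow_mul', sq_sqrt zero_le_two]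
        linear_combination 2 * x ^ n * hdup

theorem gamma_series_identity_general (l : ℝ) :
    ∑' n : ℕ, l ^ n / Real.Gamma (((n : ℝ) + 2) / 2)
      = 2 * Real.exp (l ^ 2) *
        ∫ y in Set.Iic (Real.sqrt 2 * l), (Real.sqrt (2 * Real.pi))⁻¹ * Real.exp (-y ^ 2 / 2) := by
  have h_norm (n : ℕ) :
      ∫ t in Ioi 0, ‖gaussExpSeriesTerm l n t‖ = |l| ^ n / Gamma ((n + 2) / 2) := by
    rw [← integral_gaussExpSeriesTerm]
    exact setIntegral_congr_fun measurableSet_Ioi fun t ht => norm_gaussExpSeriesTerm l n ht.le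
  calc ∑' n : ℕ, l ^ n / Gamma ((n + 2) / 2) = ∑' n, ∫ t in Ioi 0, gaussExpSeriesTerm l n t :=
        tsum_congr fun n => (integral_gaussExpSeriesTerm l n).symm
    _ = ∫ t in Ioi 0, ∑' n, gaussExpSeriesTerm l n t :=
        integral_tsum_of_summable_integral_norm (integrableOn_gaussExpSeriesTerm l)
          (by simpa only [h_norm] using summable_pow_div_Gamma_add_two_div_two |l|)
    _ = 2 * exp (l ^ 2) * ∫ t in Ioi 0, (√(2 * π))⁻¹ * exp (-(√2 * l - t) ^ 2 / 2) := by
        simp_rw [(hasSum_gaussExpSeriesTerm l _).tsum_eq]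
        exact integral_const_mul _ _
    _ = _ := by rw [integral_Iic_eq_integral_Ioi_comp_sub]

/-- `∑_{n=1}^∞ λ^{n−1}/Γ((n+1)/2) = 2 e^{λ²} Φ(√2 λ)·...` (index shifted: `n-1 ↦ n`). -/
theorem gamma_series_identity (l : ℝ) (hl : 0 ≤ l) :
    ∑' n : ℕ, l ^ n / Real.Gamma (((n : ℝ) + 2) / 2)
      = 2 * Real.exp (l ^ 2) *
        ∫ y in Set.Iic (Real.sqrt 2 * l), (Real.sqrt (2 * Real.pi))⁻¹ * Real.exp (-y ^ 2 / 2) :=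
  gamma_series_identity_general l
end

section
/- Let G_t(x,y) = ∑_{n∈ℤ} (p_t(x−y+2nL) + p_t(x+y+2nL)) be the Neumann heat kernel on [0,L]. Then for every t > 0 and x,y ∈ [0,L], G_t(x,y) ≤ p_t(x−y) · (4 + 4/(1 − e^{−L²/t})), where p_t is the Gaussian heat kernel on ℝ. -/
open Real MeasureTheory

/-- Neumann heat kernel on `[0, L]`. -/
noncomputable def GN (L t x y : ℝ) : ℝ :=
  ∑' n : ℤ, (p t (x - y + 2 * n * L) + p t (x + y + 2 * n * L))

/-!
For `x, y ∈ [0, L]` and `n ∈ ℤ`, both images `x - y + 2nL` and `x + y + 2nL` have absolute value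
at least `|x - y| + 2(|n| - 1)L`, hence square at least `(x - y)² + 2(|n| - 1)L²`; so each of
their Gaussians is at most `p_t(x - y) q^(|n| - 1)` with `q = e^(-L²/t)`. Summing the two-sided
geometric series `∑ₙ q^(|n| - 1) = 1 + 2/(1 - q)` gives `G_t(x, y) ≤ p_t(x - y) (2 + 4/(1 - q))`.
-/

lemma p_nonneg (t x : ℝ) : 0 ≤ p t x := by
  unfold p; positivity

lemma p_le_mul_exp_pow {t d a L : ℝ} (ht : 0 < t) {k : ℕ}
    (h : d ^ 2 + 2 * k * L ^ 2 ≤ a ^ 2) :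
    p t a ≤ p t d * Real.exp (-L ^ 2 / t) ^ k := by
  have hexp : -a ^ 2 / (2 * t) ≤ -d ^ 2 / (2 * t) + k * (-L ^ 2 / t) := by
    have hk : k * (-L ^ 2 / t) = -(2 * k * L ^ 2) / (2 * t) := by field_simp
    rw [hk, ← add_div, div_le_div_iff_of_pos_right (by positivity)]
    linarith
  rw [p, p, ← Real.exp_nat_mul, mul_assoc _ (Real.exp _), ← Real.exp_add]
  gcongr

lemma sq_add_two_mul_sq_le_sq {a v L : ℝ} {k : ℕ} (ha : 0 ≤ a) (hL : 0 ≤ L)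
    (h : a + 2 * k * L ≤ |v|) : a ^ 2 + 2 * k * L ^ 2 ≤ v ^ 2 := by
  have hk : (k : ℝ) ≤ k ^ 2 := by exact_mod_cast Nat.le_self_pow two_ne_zero k
  have hsq : (a + 2 * k * L) ^ 2 ≤ v ^ 2 := by
    simpa only [sq_abs] using pow_le_pow_left₀ (by positivity) h 2
  nlinarith [mul_nonneg (mul_nonneg ha k.cast_nonneg) hL,
    mul_le_mul_of_nonneg_right hk (sq_nonneg L)]

lemma add_two_mul_natAbs_sub_one_mul_le_abs {a s L : ℝ} (h₁ : a ≤ |s|)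
    (h₂ : |s| ≤ 2 * L - a) (n : ℤ) : a + 2 * ((n.natAbs - 1 : ℕ) : ℝ) * L ≤ |s + 2 * n * L| := by
  have hs := abs_le.1 h₂
  obtain ⟨m, rfl | rfl⟩ := Int.eq_nat_or_neg n
  · rcases m with _ | m
    · simpa using h₁
    · refine le_trans ?_ (le_abs_self _)
      simp only [Int.natAbs_natCast, Nat.add_sub_cancel]
      push_cast
      linarith
  · rcases m with _ | m
    · simpa using h₁
    · refine le_trans ?_ (neg_le_abs _)
      simp only [Int.natAbs_neg, Int.natAbs_natCast, Nat.add_sub_cancel]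
      push_cast
      linarith

lemma p_add_two_mul_int_mul_le {t d s L : ℝ} (ht : 0 < t) (hL : 0 ≤ L) (h₁ : |d| ≤ |s|)
    (h₂ : |s| ≤ 2 * L - |d|) (n : ℤ) :
    p t (s + 2 * n * L) ≤ p t d * Real.exp (-L ^ 2 / t) ^ (n.natAbs - 1) := by
  refine p_le_mul_exp_pow ht ?_
  rw [← sq_abs d]
  exact sq_add_two_mul_sq_le_sq (abs_nonneg d) hL
    (add_two_mul_natAbs_sub_one_mul_le_abs h₁ h₂ n)

lemma hasSum_pow_natAbs_sub_one {q : ℝ} (h₀ : 0 ≤ q) (h₁ : q < 1) :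
    HasSum (fun n : ℤ => q ^ (n.natAbs - 1)) (1 + 2 / (1 - q)) := by
  have hgeo := hasSum_geometric_of_lt_one h₀ h₁
  have hsum := HasSum.of_add_one_of_neg_add_one (f := fun n : ℤ => q ^ (n.natAbs - 1))
    (m := (1 - q)⁻¹) (m' := (1 - q)⁻¹) ?_ ?_
  · convert hsum using 1
    simp only [Int.natAbs_zero, Nat.zero_sub, pow_zero]
    ring
  all_goals
    convert hgeo using 3
    omega

theorem neumann_gaussian_upper_bound (L : ℝ) (hL : 0 < L) (t : ℝ) (ht : 0 < t)
    (x y : ℝ) (hx : x ∈ Set.Icc 0 L) (hy : y ∈ Set.Icc 0 L) :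
    GN L t x y ≤ p t (x - y) * (4 + 4 / (1 - Real.exp (-L ^ 2 / t))) := by
  set q := Real.exp (-L ^ 2 / t)
  have hq : q < 1 := Real.exp_lt_one_iff.2 (by rw [neg_div]; exact neg_neg_of_pos (by positivity))
  obtain ⟨hx₀, hxL⟩ := hx
  obtain ⟨hy₀, hyL⟩ := hy
  have hdiff : |x - y| ≤ L := abs_le.2 ⟨by linarith, by linarith⟩
  have hsum : |x - y| ≤ |x + y| ∧ |x + y| ≤ 2 * L - |x - y| := by
    rw [abs_of_nonneg (by linarith : 0 ≤ x + y)]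
    constructor <;> cases abs_cases (x - y) <;> linarith
  have hterm (n : ℤ) : p t (x - y + 2 * n * L) + p t (x + y + 2 * n * L) ≤
      2 * p t (x - y) * q ^ (n.natAbs - 1) := by
    linarith [p_add_two_mul_int_mul_le (s := x - y) ht hL.le le_rfl (by linarith) n,
      p_add_two_mul_int_mul_le ht hL.le hsum.1 hsum.2 n]
  have hgeo := (hasSum_pow_natAbs_sub_one (Real.exp_pos _).le hq).mul_left (2 * p t (x - y))
  have hsummable := hgeo.summable.of_nonneg_of_le
    (fun n => add_nonneg (p_nonneg _ _) (p_nonneg _ _)) hterm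
  calc GN L t x y ≤ 2 * p t (x - y) * (1 + 2 / (1 - q)) :=
        hasSum_le hterm hsummable.hasSum hgeo
    _ = p t (x - y) * (2 + 4 / (1 - q)) := by ring
    _ ≤ p t (x - y) * (4 + 4 / (1 - q)) :=
      mul_le_mul_of_nonneg_left (by linarith) (p_nonneg _ _)
end

section
/- For every t > 0, ∫_0^t ∑_{j∈ℤ} p_r(j) dr = ∑_{n∈ℤ} (1 − e^{−2tπ²n²})/(2π²n²) < ∞, where the n = 0 summand is interpreted as t. -/
open Real MeasureTheory

/-!
Poisson summation (the Jacobi theta transformation) turns the periodised heat kernel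
`∑ⱼ p_r(j)` into `∑ₙ exp(-2π²n²r)`. Each of these exponentials integrates over `(0, t)` to
`(1 - exp(-2π²n²t)) / (2π²n²)` (to `t` when `n = 0`), a nonnegative sequence dominated by
`1 / (2π²n²)`; so it is summable, and the integral and the sum may be interchanged.
-/

theorem tsum_p_int_eq_tsum_exp {r : ℝ} (hr : 0 < r) :
    ∑' j : ℤ, p r j = ∑' n : ℤ, exp (-(2 * π ^ 2 * n ^ 2) * r) := by
  have ha : 0 < (2 * π * r)⁻¹ := by positivity
  have hsqrt : (1 : ℝ) / (2 * π * r)⁻¹ ^ (1 / 2 : ℝ) = √(2 * π * r) := by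
    rw [inv_rpow (by positivity), one_div, inv_inv, ← sqrt_eq_rpow]
  have hp : ∀ j : ℤ, p r j = (√(2 * π * r))⁻¹ * exp (-π * (2 * π * r)⁻¹ * (j : ℝ) ^ 2) := by
    intro j
    rw [p]
    field_simp
  calc ∑' j : ℤ, p r j
      = (√(2 * π * r))⁻¹ * ∑' j : ℤ, exp (-π * (2 * π * r)⁻¹ * (j : ℝ) ^ 2) := by
        rw [← tsum_mul_left]; exact tsum_congr hp
    _ = ∑' n : ℤ, exp (-(2 * π ^ 2 * n ^ 2) * r) := by
        rw [tsum_exp_neg_mul_int_sq ha, hsqrt, ← mul_assoc,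
          inv_mul_cancel₀ (by positivity), one_mul]
        congr! 2 with n
        rw [div_inv_eq_mul]
        congr 1; ring

noncomputable def expNegIntegral (c t : ℝ) : ℝ :=
  if c = 0 then t else (1 - exp (-c * t)) / c

theorem integral_Ioo_exp_neg_mul (c : ℝ) {t : ℝ} (ht : 0 ≤ t) :
    ∫ r in Set.Ioo 0 t, exp (-c * r) = expNegIntegral c t := by
  rw [← integral_Ioc_eq_integral_Ioo, ← intervalIntegral.integral_of_le ht, expNegIntegral]
  split_ifs with hc
  · simp [hc]
  · rw [intervalIntegral.integral_comp_mul_left (fun r => exp r) (neg_ne_zero.2 hc),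
      integral_exp]
    simp only [mul_zero, exp_zero, smul_eq_mul]
    field_simp
    ring

theorem expNegIntegral_nonneg (c : ℝ) {t : ℝ} (ht : 0 ≤ t) : 0 ≤ expNegIntegral c t := by
  rw [← integral_Ioo_exp_neg_mul c ht]
  exact setIntegral_nonneg measurableSet_Ioo fun r _ => (exp_pos _).le

theorem expNegIntegral_le_inv {c : ℝ} (hc : 0 < c) (t : ℝ) : expNegIntegral c t ≤ c⁻¹ := by
  rw [expNegIntegral, if_neg hc.ne', div_eq_mul_inv]
  exact mul_le_of_le_one_left (inv_pos.2 hc).le (sub_le_self _ (exp_pos _).le)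

theorem summable_expNegIntegral_mul_int_sq {a : ℝ} (ha : 0 < a) {t : ℝ} (ht : 0 ≤ t) :
    Summable fun n : ℤ => expNegIntegral (a * n ^ 2) t := by
  refine ((summable_one_div_int_pow.2 one_lt_two).mul_left a⁻¹).of_norm_bounded_eventually ?_
  filter_upwards [(Set.finite_singleton (0 : ℤ)).compl_mem_cofinite] with n hn
  have hn : (n : ℝ) ≠ 0 := Int.cast_ne_zero.2 hn
  rw [Real.norm_of_nonneg (expNegIntegral_nonneg _ ht), one_div, ← mul_inv]
  exact expNegIntegral_le_inv (by positivity) t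

theorem integral_Ioo_tsum_exp_neg_mul {ι : Type*} [Countable ι] (c : ι → ℝ) {t : ℝ} (ht : 0 ≤ t)
    (hsum : Summable fun i => expNegIntegral (c i) t) :
    ∫ r in Set.Ioo 0 t, ∑' i, exp (-c i * r) = ∑' i, expNegIntegral (c i) t := by
  have hint : ∀ i, IntegrableOn (fun r => exp (-c i * r)) (Set.Ioo 0 t) :=
    fun i => (continuous_exp.comp (continuous_const_mul _)).integrableOn_Icc.mono_set
      Set.Ioo_subset_Icc_self
  rw [← integral_tsum_of_summable_integral_norm hint]
  · simp_rw [integral_Ioo_exp_neg_mul _ ht]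
  · simpa only [norm_of_nonneg (exp_pos _).le, integral_Ioo_exp_neg_mul _ ht] using hsum

theorem integral_sum_heat_kernel_integers (t : ℝ) (ht : 0 < t) :
    (∫ r in Set.Ioo 0 t, ∑' j : ℤ, p r (j : ℝ))
        = ∑' n : ℤ, (if n = 0 then t
            else (1 - Real.exp (-2 * t * Real.pi ^ 2 * (n : ℝ) ^ 2)) /
              (2 * Real.pi ^ 2 * (n : ℝ) ^ 2)) ∧
      Summable (fun n : ℤ => (if n = 0 then t
            else (1 - Real.exp (-2 * t * Real.pi ^ 2 * (n : ℝ) ^ 2)) /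
              (2 * Real.pi ^ 2 * (n : ℝ) ^ 2))) := by
  have hterm : (fun n : ℤ => if n = 0 then t
      else (1 - exp (-2 * t * π ^ 2 * (n : ℝ) ^ 2)) / (2 * π ^ 2 * (n : ℝ) ^ 2))
        = fun n : ℤ => expNegIntegral (2 * π ^ 2 * n ^ 2) t := by
    ext n
    have hzero : (2 * π ^ 2 * n ^ 2 : ℝ) = 0 ↔ n = 0 := by simp [pi_ne_zero]
    simp only [expNegIntegral, hzero]
    congr! 3
    congr 1; ring
  have hsum := summable_expNegIntegral_mul_int_sq (by positivity : 0 < 2 * π ^ 2) ht.le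
  rw [hterm]
  refine ⟨?_, hsum⟩
  rw [setIntegral_congr_fun measurableSet_Ioo fun r hr => tsum_p_int_eq_tsum_exp hr.1]
  exact integral_Ioo_tsum_exp_neg_mul _ ht.le hsum
end
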